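/- There is a constant K (one can take K = 12) such that every h in the first-level stabilizer H of the Grigorchuk group satisfies |h| ≤ 4·max{|h₀|, |h₁|} + K, where ψ(h) = (h₀, h₁) and |·| denotes word length with respect to {a, b, c, d}. -/

import Mathlib

/-- The generator `a` of the Grigorchuk group, acting on finite binary sequences. -/
def grigA : List Bool → List Bool
  | [] => []
  | x :: σ => (!x) :: σ

mutual
  /-- The generator `b` of the Grigorchuk group. -/
  def grigB : List Bool → List Bool
    | [] => []
    | false :: σ => false :: grigA σ
    | true :: σ => true :: grigC σ
  /-- The generator `c` of the Grigorchuk group. -/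
  def grigC : List Bool → List Bool
    | [] => []
    | false :: σ => false :: grigA σ
    | true :: σ => true :: grigD σ
  /-- The generator `d` of the Grigorchuk group. -/
  def grigD : List Bool → List Bool
    | [] => []
    | false :: σ => false :: σ
    | true :: σ => true :: grigB σ
end

theorem grigA_involutive : Function.Involutive grigA := by
  intro l
  rcases l with _ | ⟨x, σ⟩
  · rfl
  · cases x <;> rfl

theorem grigBCD_involutive :
    ∀ l : List Bool, grigB (grigB l) = l ∧ grigC (grigC l) = l ∧ grigD (grigD l) = l := by
  intro l
  induction l with
  | nil => exact ⟨rfl, rfl, rfl⟩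
  | cons x σ ih =>
      cases x <;>
        simp [grigB, grigC, grigD, grigA_involutive σ, ih.1, ih.2.1, ih.2.2]

theorem grigB_involutive : Function.Involutive grigB := fun l => (grigBCD_involutive l).1
theorem grigC_involutive : Function.Involutive grigC := fun l => (grigBCD_involutive l).2.1
theorem grigD_involutive : Function.Involutive grigD := fun l => (grigBCD_involutive l).2.2

/-- The generator `a` as a permutation of binary sequences. -/
def aP : Equiv.Perm (List Bool) := grigA_involutive.toPerm
/-- The generator `b` as a permutation of binary sequences. -/
def bP : Equiv.Perm (List Bool) := grigB_involutive.toPerm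
/-- The generator `c` as a permutation of binary sequences. -/
def cP : Equiv.Perm (List Bool) := grigC_involutive.toPerm
/-- The generator `d` as a permutation of binary sequences. -/
def dP : Equiv.Perm (List Bool) := grigD_involutive.toPerm

/-- The Grigorchuk group, as the group of permutations of finite binary sequences
generated by `a`, `b`, `c`, `d`. -/
def Grig : Subgroup (Equiv.Perm (List Bool)) := Subgroup.closure {aP, bP, cP, dP}

/-- `a` as an element of the Grigorchuk group. -/
def ga : Grig := ⟨aP, Subgroup.subset_closure (by simp)⟩
/-- `b` as an element of the Grigorchuk group. -/
def gb : Grig := ⟨bP, Subgroup.subset_closure (by simp)⟩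
/-- `c` as an element of the Grigorchuk group. -/
def gc : Grig := ⟨cP, Subgroup.subset_closure (by simp)⟩
/-- `d` as an element of the Grigorchuk group. -/
def gd : Grig := ⟨dP, Subgroup.subset_closure (by simp)⟩

/-- A permutation of binary sequences preserves the first letter. -/
def FixesFirst (g : Equiv.Perm (List Bool)) : Prop :=
  ∀ (x : Bool) (σ : List Bool), ∃ σ' : List Bool, g (x :: σ) = x :: σ'
/-- The weight (norm) on a group `G` induced by a weight function `ω` on a generating set
`S`: the infimum of the total weights of words over `S` representing `g`. -/
noncomputable def wordWeight {G : Type*} [Group G] (S : Set G) (ω : G → ℝ) (g : G) : ℝ :=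
  sInf ((fun l : List G => (l.map ω).sum) '' {l : List G | (∀ s ∈ l, s ∈ S) ∧ l.prod = g})

/-- The growth function of `G` with respect to the generating set `S` and weight `ω`:
the number of elements of weight at most `x`. -/
noncomputable def growth {G : Type*} [Group G] (S : Set G) (ω : G → ℝ) (x : ℝ) : ℕ :=
  Nat.card {g : G | wordWeight S ω g ≤ x}

/-- The word length of `g` with respect to the generating set `S`. -/
noncomputable def wordLength {G : Type*} [Group G] (S : Set G) (g : G) : ℕ :=
  sInf {n : ℕ | ∃ l : List G, (∀ s ∈ l, s ∈ S) ∧ l.prod = g ∧ l.length = n}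

/-- The defining property of the subtree-decomposition map `ψ : H → G × G`:
`h(0σ) = 0·h₀(σ)` and `h(1σ) = 1·h₁(σ)` where `ψ(h) = (h₀, h₁)`. -/
def PsiProp (H : Subgroup Grig) (ψ : H →* Grig × Grig) : Prop :=
  ∀ (h : H) (σ : List Bool),
    ((h : Grig) : Equiv.Perm (List Bool)) (false :: σ) =
        false :: (((ψ h).1 : Grig) : Equiv.Perm (List Bool)) σ ∧
    ((h : Grig) : Equiv.Perm (List Bool)) (true :: σ) =
        true :: (((ψ h).2 : Grig) : Equiv.Perm (List Bool)) σ

/-!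
Write `ψ(h) = (x, y)` and pick geodesic words `u`, `v` for `x`, `y`; geodesic words alternate
between `a` and letters of `{b, c, d}`. The substitutions `a ↦ c, b ↦ ada, c ↦ aba, d ↦ aca` and
`a ↦ aca, b ↦ d, c ↦ b, d ↦ c` turn `u` and `v` into words of length at most `2|u| + 1` and
`2|v| + 1` representing elements of `H` with sections `(x, π'(x))` and `(π'(y), y)`, where
`π' : G → ⟨a, d⟩` sends `a ↦ d`, `b ↦ 1`, `c, d ↦ a`. The unwanted factors `π'(y)` and `π'(x)` are
cancelled by a word of length at most `9` in `c` and `aca`: this is possible because the sections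
of every element satisfy `π'(g₁) = π(g₀)`, where `π : G → G/⟨⟨b⟩⟩ ≅ ⟨a, d⟩` is the quotient map.
Both maps are assembled from the activity at the root and the parities of the level-two portraits
of the two sections, which are homomorphisms `G → ℤ/2`.
-/

theorem List.two_mul_countP_le_of_isChain {α : Type*} {f : α → Bool} :
    ∀ {l : List α}, l.IsChain (fun x y => f x ≠ f y) → 2 * l.countP f ≤ l.length + 1
  | [], _ => by simp
  | [a], _ => by cases h : f a <;> simp [h]
  | a :: b :: l, h => by
    have ih := List.two_mul_countP_le_of_isChain h.tail.tail
    have hab := (List.isChain_cons_cons.1 h).1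
    simp only [List.countP_cons, List.length_cons]
    cases ha : f a <;> cases hb : f b <;> simp_all <;> omega

section Klein

variable {M : Type*} [Group M] {s t u : M}

def kleinElt (t u : M) (p q : Bool) : M := (if p then t else 1) * (if q then u else 1)

theorem kleinElt_xor (ht : t * t = 1) (hu : u * u = 1) (htu : t * u = u * t) (p q p' q' : Bool) :
    kleinElt t u (p ^^ p') (q ^^ q') = kleinElt t u p q * kleinElt t u p' q' := by
  have ht' : ∀ x, t * (t * x) = x := fun x => by rw [← mul_assoc, ht, one_mul]
  have htu' : ∀ x, u * (t * x) = t * (u * x) := fun x => by rw [← mul_assoc, ← htu, mul_assoc]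
  cases p <;> cases q <;> cases p' <;> cases q' <;>
    simp [kleinElt, mul_assoc, ht, hu, ht', htu', ← htu]

theorem mul_kleinElt (hst : s * t = u * s) (hsu : s * u = t * s) (htu : t * u = u * t)
    (p q : Bool) : s * kleinElt t u p q = kleinElt t u q p * s := by
  cases p <;> cases q <;> simp only [kleinElt, if_true, if_false, Bool.false_eq_true, mul_one,
    one_mul, hst, hsu]
  rw [← mul_assoc, hst, mul_assoc, hsu, ← mul_assoc, htu]

end Klein

namespace Grig

inductive Letter : Type
  | A | B | C | D

def gen : Letter → Grig
  | .A => ga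
  | .B => gb
  | .C => gc
  | .D => gd

theorem gen_mul_self (ℓ : Letter) : gen ℓ * gen ℓ = 1 := by
  refine Subtype.ext (Equiv.ext fun l => ?_)
  cases ℓ
  · exact grigA_involutive l
  · exact grigB_involutive l
  · exact grigC_involutive l
  · exact grigD_involutive l

theorem gen_inv (ℓ : Letter) : (gen ℓ)⁻¹ = gen ℓ :=
  inv_eq_of_mul_eq_one_right (gen_mul_self ℓ)

theorem induction_on {P : Grig → Prop} (one : P 1) (gen_mul : ∀ ℓ g, P g → P (gen ℓ * g))
    (g : Grig) : P g := by
  obtain ⟨x, hx⟩ := g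
  have hgen : ∀ y ∈ ({aP, bP, cP, dP} : Set (Equiv.Perm (List Bool))),
      ∃ ℓ, (gen ℓ : Grig) = y := by
    rintro y (rfl | rfl | rfl | rfl)
    exacts [⟨.A, rfl⟩, ⟨.B, rfl⟩, ⟨.C, rfl⟩, ⟨.D, rfl⟩]
  induction hx using Subgroup.closure_induction_left with
  | one => exact one
  | mul_left y hy z hz ih =>
    obtain ⟨ℓ, rfl⟩ := hgen y hy
    exact gen_mul ℓ ⟨z, hz⟩ ih
  | inv_mul_cancel y hy z hz ih =>
    obtain ⟨ℓ, rfl⟩ := hgen y hy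
    have := gen_mul ℓ ⟨z, hz⟩ ih
    rwa [← gen_inv] at this

/-- `e` is the activity of `g` at the root and `s x` its section at the vertex `x`. -/
def IsDecomposition (g : Grig) (e : Bool) (s : Bool → Grig) : Prop :=
  (g : Equiv.Perm (List Bool)) [] = [] ∧
    ∀ x σ, (g : Equiv.Perm (List Bool)) (x :: σ) = (e ^^ x) :: (s x : Equiv.Perm (List Bool)) σ

theorem IsDecomposition.mul {g h : Grig} {e f : Bool} {s t : Bool → Grig}
    (hg : IsDecomposition g e s) (hh : IsDecomposition h f t) :
    IsDecomposition (g * h) (e ^^ f) (fun x => s (f ^^ x) * t x) :=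
  ⟨by simp [hh.1, hg.1], fun x σ => by simp [hh.2, hg.2]⟩

theorem exists_isDecomposition_gen : ∀ ℓ : Letter, ∃ e s, IsDecomposition (gen ℓ) e s
  | .A => ⟨true, fun _ => 1, rfl, fun x σ => by cases x <;> rfl⟩
  | .B => ⟨false, fun x => if x then gc else ga, rfl, fun x σ => by cases x <;> rfl⟩
  | .C => ⟨false, fun x => if x then gd else ga, rfl, fun x σ => by cases x <;> rfl⟩
  | .D => ⟨false, fun x => if x then gb else 1, rfl, fun x σ => by cases x <;> rfl⟩

theorem exists_isDecomposition (g : Grig) : ∃ e s, IsDecomposition g e s := by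
  induction g using induction_on with
  | one => exact ⟨false, fun _ => 1, rfl, fun x σ => by cases x <;> rfl⟩
  | gen_mul ℓ g ih =>
    obtain ⟨e, s, hs⟩ := exists_isDecomposition_gen ℓ
    obtain ⟨f, t, ht⟩ := ih
    exact ⟨_, _, hs.mul ht⟩

noncomputable def activity (g : Grig) : Bool := (exists_isDecomposition g).choose

noncomputable def sectionAt (g : Grig) : Bool → Grig :=
  (exists_isDecomposition g).choose_spec.choose

theorem isDecomposition (g : Grig) : IsDecomposition g (activity g) (sectionAt g) :=
  (exists_isDecomposition g).choose_spec.choose_spec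

theorem apply_cons (g : Grig) (x : Bool) (σ : List Bool) :
    (g : Equiv.Perm (List Bool)) (x :: σ) =
      (activity g ^^ x) :: (sectionAt g x : Equiv.Perm (List Bool)) σ :=
  (isDecomposition g).2 x σ

theorem IsDecomposition.eq {g : Grig} {e : Bool} {s : Bool → Grig}
    (h : IsDecomposition g e s) : activity g = e ∧ sectionAt g = s := by
  have hcons := fun x σ => (apply_cons g x σ).symm.trans (h.2 x σ)
  simp only [List.cons.injEq] at hcons
  exact ⟨by simpa using (hcons false []).1,
    funext fun x => Subtype.ext (Equiv.ext fun σ => (hcons x σ).2)⟩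

theorem ext_decomposition {g h : Grig} (he : activity g = activity h)
    (hs : sectionAt g = sectionAt h) : g = h := by
  refine Subtype.ext (Equiv.ext fun l => ?_)
  rcases l with _ | ⟨x, σ⟩
  · rw [(isDecomposition g).1, (isDecomposition h).1]
  · rw [apply_cons, apply_cons, he, hs]

@[simp] theorem activity_mul (g h : Grig) : activity (g * h) = (activity g ^^ activity h) :=
  ((isDecomposition g).mul (isDecomposition h)).eq.1

@[simp] theorem sectionAt_mul (g h : Grig) (x : Bool) :
    sectionAt (g * h) x = sectionAt g (activity h ^^ x) * sectionAt h x :=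
  congrFun ((isDecomposition g).mul (isDecomposition h)).eq.2 x

theorem activity_sectionAt_one : activity 1 = false ∧ sectionAt 1 = fun _ => 1 :=
  IsDecomposition.eq ⟨rfl, fun x _ => by cases x <;> rfl⟩

theorem activity_sectionAt_ga : activity ga = true ∧ sectionAt ga = fun _ => 1 :=
  IsDecomposition.eq ⟨rfl, fun x _ => by cases x <;> rfl⟩

theorem activity_sectionAt_gb :
    activity gb = false ∧ sectionAt gb = fun x => if x then gc else ga :=
  IsDecomposition.eq ⟨rfl, fun x _ => by cases x <;> rfl⟩

theorem activity_sectionAt_gc :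
    activity gc = false ∧ sectionAt gc = fun x => if x then gd else ga :=
  IsDecomposition.eq ⟨rfl, fun x _ => by cases x <;> rfl⟩

theorem activity_sectionAt_gd :
    activity gd = false ∧ sectionAt gd = fun x => if x then gb else 1 :=
  IsDecomposition.eq ⟨rfl, fun x _ => by cases x <;> rfl⟩

@[simp] theorem activity_one : activity 1 = false := activity_sectionAt_one.1
@[simp] theorem activity_ga : activity ga = true := activity_sectionAt_ga.1
@[simp] theorem activity_gb : activity gb = false := activity_sectionAt_gb.1
@[simp] theorem activity_gc : activity gc = false := activity_sectionAt_gc.1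
@[simp] theorem activity_gd : activity gd = false := activity_sectionAt_gd.1

theorem activity_inv (g : Grig) : activity g⁻¹ = activity g := by
  have := activity_mul g⁻¹ g
  rw [inv_mul_cancel, activity_one] at this
  cases h : activity g <;> simp_all

@[simp] theorem sectionAt_one (x : Bool) : sectionAt 1 x = 1 :=
  congrFun activity_sectionAt_one.2 x
@[simp] theorem sectionAt_ga (x : Bool) : sectionAt ga x = 1 :=
  congrFun activity_sectionAt_ga.2 x
@[simp] theorem sectionAt_gb (x : Bool) : sectionAt gb x = if x then gc else ga :=
  congrFun activity_sectionAt_gb.2 x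
@[simp] theorem sectionAt_gc (x : Bool) : sectionAt gc x = if x then gd else ga :=
  congrFun activity_sectionAt_gc.2 x
@[simp] theorem sectionAt_gd (x : Bool) : sectionAt gd x = if x then gb else 1 :=
  congrFun activity_sectionAt_gd.2 x

/-- The parity of the number of level-`n` vertices at which `g` is active; for `n = 2` it is
the parity of the number of letters `b`, `d` in any word for `g`. -/
noncomputable def portraitParity : ℕ → Grig → Bool
  | 0, g => activity g
  | n + 1, g => portraitParity n (sectionAt g false) ^^ portraitParity n (sectionAt g true)

theorem portraitParity_mul (n : ℕ) (g h : Grig) :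
    portraitParity n (g * h) = (portraitParity n g ^^ portraitParity n h) := by
  induction n generalizing g h with
  | zero => exact activity_mul g h
  | succ n ih =>
    simp only [portraitParity, sectionAt_mul, ih]
    cases activity h <;> simp [Bool.xor_comm, Bool.xor_left_comm]

section Dihedral

variable {M : Type*} [Group M] {s t : M}

noncomputable def toDihedral (s t : M) (g : Grig) : M :=
  (if activity g then s else 1) *
    kleinElt t (s * t * s) (portraitParity 2 (sectionAt g true))
      (portraitParity 2 (sectionAt g false))

theorem toDihedral_mul (hs : s * s = 1) (ht : t * t = 1) (hst : t * (s * t * s) = s * t * s * t)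
    (g h : Grig) : toDihedral s t (g * h) = toDihedral s t g * toDihedral s t h := by
  have hu : s * t * s * (s * t * s) = 1 := by
    simp only [mul_assoc, ← mul_assoc s s, hs, one_mul, ← mul_assoc t t, ht]
  have hsu : s * (s * t * s) = t * s := by rw [← mul_assoc, ← mul_assoc, hs, one_mul]
  have hstu : s * t = s * t * s * s := by rw [mul_assoc, hs, mul_one]
  have hss : ∀ x, s * (s * x) = x := fun x => by rw [← mul_assoc, hs, one_mul]
  simp only [toDihedral, activity_mul, sectionAt_mul, portraitParity_mul]
  generalize s * t * s = u at *
  cases activity h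
  · simp only [Bool.xor_false, Bool.false_xor, kleinElt_xor ht hu hst, Bool.false_eq_true,
      if_false, one_mul, mul_assoc]
  · simp only [Bool.xor_true, kleinElt_xor ht hu hst, if_true, ← mul_assoc]
    rw [mul_assoc _ (kleinElt _ _ _ _) s, ← mul_kleinElt hstu hsu hst]
    cases activity g <;> simp [hss]

noncomputable def toDihedralHom (hs : s * s = 1) (ht : t * t = 1)
    (hst : t * (s * t * s) = s * t * s * t) : Grig →* M where
  toFun := toDihedral s t
  map_one' := by simp [toDihedral, portraitParity, kleinElt]
  map_mul' := toDihedral_mul hs ht hst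

@[simp] theorem toDihedralHom_apply (hs : s * s = 1) (ht : t * t = 1)
    (hst : t * (s * t * s) = s * t * s * t) (g : Grig) :
    toDihedralHom hs ht hst g = toDihedral s t g := rfl

end Dihedral

theorem gd_commute_ga_gd_ga : gd * (ga * gd * ga) = ga * gd * ga * gd :=
  ext_decomposition (by simp) (funext fun x => by cases x <;> simp)

theorem ga_commute_gd_ga_gd : ga * (gd * ga * gd) = gd * ga * gd * ga :=
  ext_decomposition (by simp) (funext fun x => by cases x <;> simp)

theorem ga_mul_self : ga * ga = 1 := gen_mul_self .A

theorem gd_mul_self : gd * gd = 1 := gen_mul_self .D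

/-- The quotient map `G → G/⟨⟨b⟩⟩ ≅ ⟨a, d⟩`. -/
noncomputable def projAD : Grig →* Grig :=
  toDihedralHom ga_mul_self gd_mul_self gd_commute_ga_gd_ga

/-- `projAD` followed by the automorphism of `⟨a, d⟩` swapping `a` and `d`. -/
noncomputable def projDA : Grig →* Grig :=
  toDihedralHom gd_mul_self ga_mul_self ga_commute_gd_ga_gd

theorem projAD_gens : projAD ga = ga ∧ projAD gb = 1 ∧ projAD gc = gd ∧ projAD gd = gd := by
  simp [projAD, toDihedral, portraitParity, kleinElt]

theorem projDA_gens : projDA ga = gd ∧ projDA gb = 1 ∧ projDA gc = ga ∧ projDA gd = ga := by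
  simp [projDA, toDihedral, portraitParity, kleinElt]

@[simp] theorem projAD_ga : projAD ga = ga := projAD_gens.1
@[simp] theorem projAD_gb : projAD gb = 1 := projAD_gens.2.1
@[simp] theorem projAD_gc : projAD gc = gd := projAD_gens.2.2.1
@[simp] theorem projAD_gd : projAD gd = gd := projAD_gens.2.2.2
@[simp] theorem projDA_ga : projDA ga = gd := projDA_gens.1
@[simp] theorem projDA_gb : projDA gb = 1 := projDA_gens.2.1
@[simp] theorem projDA_gc : projDA gc = ga := projDA_gens.2.2.1
@[simp] theorem projDA_gd : projDA gd = ga := projDA_gens.2.2.2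

/-- In `G/⟨⟨b⟩⟩ ≅ ⟨a, d⟩`, the two sections of any element differ by the swap `a ↔ d`. -/
theorem projDA_sectionAt (g : Grig) (x : Bool) :
    projDA (sectionAt g x) = projAD (sectionAt g !x) := by
  have hgen : ∀ ℓ y, projDA (sectionAt (gen ℓ) y) = projAD (sectionAt (gen ℓ) !y) := by
    intro ℓ y
    cases ℓ <;> cases y <;> simp [gen]
  induction g using induction_on generalizing x with
  | one => simp
  | gen_mul ℓ g ih => simp [hgen, ih]

def evalWord (w : List Letter) : Grig := (w.map gen).prod

@[simp] theorem evalWord_nil : evalWord [] = 1 := rfl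

@[simp] theorem evalWord_cons (ℓ : Letter) (w : List Letter) :
    evalWord (ℓ :: w) = gen ℓ * evalWord w := List.prod_cons

@[simp] theorem evalWord_append (w w' : List Letter) :
    evalWord (w ++ w') = evalWord w * evalWord w' := by
  simp [evalWord]

theorem exists_evalWord_eq (g : Grig) : ∃ w, evalWord w = g := by
  induction g using induction_on with
  | one => exact ⟨[], rfl⟩
  | gen_mul ℓ g ih =>
    obtain ⟨w, rfl⟩ := ih
    exact ⟨ℓ :: w, rfl⟩

theorem range_gen : Set.range gen = {ga, gb, gc, gd} := by
  ext g
  constructor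
  · rintro ⟨ℓ, rfl⟩
    cases ℓ <;> simp [gen]
  · rintro (rfl | rfl | rfl | rfl)
    exacts [⟨.A, rfl⟩, ⟨.B, rfl⟩, ⟨.C, rfl⟩, ⟨.D, rfl⟩]

theorem wordLength_evalWord_le (w : List Letter) :
    wordLength {ga, gb, gc, gd} (evalWord w) ≤ w.length :=
  Nat.sInf_le ⟨w.map gen, by simp [← range_gen], rfl, List.length_map _⟩

theorem exists_evalWord_eq_length_eq (g : Grig) :
    ∃ w, evalWord w = g ∧ w.length = wordLength {ga, gb, gc, gd} g := by
  obtain ⟨w, rfl⟩ := exists_evalWord_eq g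
  let lengths := {n | ∃ l : List Grig, (∀ s ∈ l, s ∈ ({ga, gb, gc, gd} : Set Grig)) ∧
    l.prod = evalWord w ∧ l.length = n}
  obtain ⟨l, hl, hprod, hlen⟩ : sInf lengths ∈ lengths :=
    Nat.sInf_mem ⟨w.length, w.map gen, by simp [← range_gen], rfl, List.length_map _⟩
  obtain ⟨w', rfl⟩ : l ∈ Set.range (List.map gen) := by
    rwa [Set.range_list_map, range_gen]
  exact ⟨w', hprod, by rw [← List.length_map gen, hlen]; rfl⟩

theorem grigBCD_comp (l : List Bool) :
    grigB (grigC l) = grigD l ∧ grigC (grigD l) = grigB l ∧ grigD (grigB l) = grigC l := by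
  induction l with
  | nil => exact ⟨rfl, rfl, rfl⟩
  | cons x σ ih =>
    cases x <;> simp [grigB, grigC, grigD, grigA_involutive σ, ih.1, ih.2.1, ih.2.2]

theorem gen_mul_gen_rev {p q r : Letter} (h : gen p * gen q = gen r) :
    gen q * gen p = gen r := by
  rw [← gen_inv p, ← gen_inv q, ← mul_inv_rev, h, gen_inv]

def isA : Letter → Bool
  | .A => true
  | _ => false

theorem exists_evalWord_eq_gen_mul_gen {p q : Letter} (h : isA p = isA q) :
    ∃ r : List Letter, r.length ≤ 1 ∧ evalWord r = gen p * gen q := by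
  have hBC : gen .B * gen .C = gen .D := Subtype.ext (Equiv.ext fun l => (grigBCD_comp l).1)
  have hCD : gen .C * gen .D = gen .B := Subtype.ext (Equiv.ext fun l => (grigBCD_comp l).2.1)
  have hDB : gen .D * gen .B = gen .C := Subtype.ext (Equiv.ext fun l => (grigBCD_comp l).2.2)
  cases p <;> cases q <;> simp only [isA, Bool.true_eq_false, Bool.false_eq_true] at h
  all_goals first
    | exact ⟨[], by simp, (gen_mul_self _).symm⟩
    | exact ⟨[_], le_rfl, by simpa using hBC.symm⟩
    | exact ⟨[_], le_rfl, by simpa using hCD.symm⟩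
    | exact ⟨[_], le_rfl, by simpa using hDB.symm⟩
    | exact ⟨[_], le_rfl, by simpa using (gen_mul_gen_rev hBC).symm⟩
    | exact ⟨[_], le_rfl, by simpa using (gen_mul_gen_rev hCD).symm⟩
    | exact ⟨[_], le_rfl, by simpa using (gen_mul_gen_rev hDB).symm⟩

def IsGeodesic (w : List Letter) : Prop :=
  ∀ w', evalWord w' = evalWord w → w.length ≤ w'.length

theorem isGeodesic_of_length_eq {w : List Letter}
    (hw : w.length = wordLength {ga, gb, gc, gd} (evalWord w)) : IsGeodesic w :=
  fun w' hw' => hw ▸ hw' ▸ wordLength_evalWord_le w'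

theorem IsGeodesic.of_cons {ℓ : Letter} {w : List Letter} (h : IsGeodesic (ℓ :: w)) :
    IsGeodesic w :=
  fun w' hw' => by simpa using h (ℓ :: w') (by simp [hw'])

theorem IsGeodesic.isA_ne {p q : Letter} {w : List Letter} (h : IsGeodesic (p :: q :: w)) :
    isA p ≠ isA q := by
  intro hpq
  obtain ⟨r, hr, hrpq⟩ := exists_evalWord_eq_gen_mul_gen hpq
  have := h (r ++ w) (by simp [hrpq, mul_assoc])
  simp only [List.length_cons, List.length_append] at this
  omega

theorem IsGeodesic.isChain : ∀ {w : List Letter}, IsGeodesic w → w.IsChain (isA · ≠ isA ·)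
  | [], _ => .nil
  | [ℓ], _ => .singleton ℓ
  | _ :: _ :: _, h => .cons_cons h.isA_ne h.of_cons.isChain

def HasSections (g g₀ g₁ : Grig) : Prop :=
  activity g = false ∧ sectionAt g false = g₀ ∧ sectionAt g true = g₁

theorem HasSections.mul {g g₀ g₁ h h₀ h₁ : Grig} (hg : HasSections g g₀ g₁)
    (hh : HasSections h h₀ h₁) : HasSections (g * h) (g₀ * h₀) (g₁ * h₁) := by
  obtain ⟨hg, rfl, rfl⟩ := hg
  obtain ⟨hh, rfl, rfl⟩ := hh
  simp [HasSections, hg, hh]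

theorem HasSections.eq {g h g₀ g₁ : Grig} (hg : HasSections g g₀ g₁)
    (hh : HasSections h g₀ g₁) : g = h := by
  refine ext_decomposition (hg.1.trans hh.1.symm) (funext fun x => ?_)
  cases x
  exacts [hg.2.1.trans hh.2.1.symm, hg.2.2.trans hh.2.2.symm]

theorem hasSections_evalWord_flatMap {f : Letter → List Letter} {φ₀ φ₁ : Grig →* Grig}
    (hf : ∀ ℓ, HasSections (evalWord (f ℓ)) (φ₀ (gen ℓ)) (φ₁ (gen ℓ)))
    (w : List Letter) :
    HasSections (evalWord (w.flatMap f)) (φ₀ (evalWord w)) (φ₁ (evalWord w)) := by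
  induction w with
  | nil => simp [HasSections]
  | cons ℓ w ih => simpa using (hf ℓ).mul ih

def substLeft : Letter → List Letter
  | .A => [.C]
  | .B => [.A, .D, .A]
  | .C => [.A, .B, .A]
  | .D => [.A, .C, .A]

def substRight : Letter → List Letter
  | .A => [.A, .C, .A]
  | .B => [.D]
  | .C => [.B]
  | .D => [.C]

theorem hasSections_substLeft (w : List Letter) :
    HasSections (evalWord (w.flatMap substLeft)) (evalWord w) (projDA (evalWord w)) :=
  hasSections_evalWord_flatMap (φ₀ := MonoidHom.id _)
    (fun ℓ => by cases ℓ <;> simp [HasSections, substLeft, gen]) w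

theorem hasSections_substRight (w : List Letter) :
    HasSections (evalWord (w.flatMap substRight)) (projDA (evalWord w)) (evalWord w) :=
  hasSections_evalWord_flatMap (φ₁ := MonoidHom.id _)
    (fun ℓ => by cases ℓ <;> simp [HasSections, substRight, gen]) w

theorem length_flatMap_substLeft (w : List Letter) :
    (w.flatMap substLeft).length = w.length + 2 * w.countP (fun ℓ => !isA ℓ) := by
  induction w with
  | nil => rfl
  | cons ℓ w ih => cases ℓ <;> simp [substLeft, isA, ih] <;> ring

theorem length_flatMap_substRight (w : List Letter) :
    (w.flatMap substRight).length = w.length + 2 * w.countP isA := by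
  induction w with
  | nil => rfl
  | cons ℓ w ih => cases ℓ <;> simp [substRight, isA, ih, List.countP_cons] <;> ring

theorem IsGeodesic.length_flatMap_substLeft_le {w : List Letter} (hw : IsGeodesic w) :
    (w.flatMap substLeft).length ≤ 2 * w.length + 1 := by
  have := List.two_mul_countP_le_of_isChain (f := fun ℓ => !isA ℓ)
    (hw.isChain.imp fun p q h => by simpa using h)
  rw [length_flatMap_substLeft]
  omega

theorem IsGeodesic.length_flatMap_substRight_le {w : List Letter} (hw : IsGeodesic w) :
    (w.flatMap substRight).length ≤ 2 * w.length + 1 := by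
  have := List.two_mul_countP_le_of_isChain hw.isChain
  rw [length_flatMap_substRight]
  omega

/-- `c`, `aca` and `cacac` have sections `(a, d)`, `(d, a)` and `(ada, dad)`. -/
def correction (e p q : Bool) : List Letter :=
  (if e then [.C] else []) ++ (if p then [.A, .C, .A] else []) ++
    (if q then [.C, .A, .C, .A, .C] else [])

theorem exists_hasSections_projAD_projDA (g : Grig) :
    ∃ w : List Letter, w.length ≤ 9 ∧ HasSections (evalWord w) (projAD g) (projDA g) := by
  refine ⟨correction (activity g) (portraitParity 2 (sectionAt g true))
    (portraitParity 2 (sectionAt g false)), ?_, ?_⟩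
  · unfold correction
    split_ifs <;> simp
  · simp only [projAD, projDA, toDihedralHom_apply, toDihedral, kleinElt, correction]
    split_ifs <;> simp [HasSections, gen, mul_assoc]

def levelOneStabilizer : Subgroup Grig where
  carrier := {g | activity g = false}
  mul_mem' {g h} hg hh := by simp_all
  one_mem' := activity_one
  inv_mem' {g} hg := by simp_all [activity_inv]

theorem mem_levelOneStabilizer_iff (g : Grig) :
    g ∈ levelOneStabilizer ↔ FixesFirst (g : Equiv.Perm (List Bool)) := by
  refine ⟨fun hg x σ => ⟨(sectionAt g x : Equiv.Perm (List Bool)) σ, ?_⟩, fun hg => ?_⟩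
  · rw [apply_cons, show activity g = false from hg, Bool.false_xor]
  · obtain ⟨σ, hσ⟩ := hg false []
    rw [apply_cons, List.cons.injEq, Bool.xor_false] at hσ
    exact hσ.1

noncomputable def sections : levelOneStabilizer →* Grig × Grig where
  toFun h := (sectionAt h false, sectionAt h true)
  map_one' := by simp
  map_mul' g h := by
    have hh : activity (h : Grig) = false := h.2
    simp [hh]

theorem psiProp_sections : PsiProp levelOneStabilizer sections := by
  intro h σ
  have hh : activity (h : Grig) = false := h.2
  simp [sections, apply_cons, hh]

theorem hasSections_sections (h : levelOneStabilizer) :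
    HasSections h (sections h).1 (sections h).2 :=
  ⟨h.2, rfl, rfl⟩

theorem wordLength_le_of_hasSections {h x y : Grig} (hxy : HasSections h x y) :
    wordLength {ga, gb, gc, gd} h ≤
      2 * wordLength {ga, gb, gc, gd} x + 2 * wordLength {ga, gb, gc, gd} y + 11 := by
  obtain ⟨u, rfl, hu⟩ := exists_evalWord_eq_length_eq x
  obtain ⟨v, rfl, hv⟩ := exists_evalWord_eq_length_eq y
  obtain ⟨c, hc, hcs⟩ := exists_hasSections_projAD_projDA (evalWord u)⁻¹
  have hproj : projDA (evalWord v) = projAD (evalWord u) := by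
    rw [← hxy.2.1, ← hxy.2.2, projDA_sectionAt, Bool.not_true]
  have hW : HasSections (evalWord (u.flatMap substLeft ++ c ++ v.flatMap substRight))
      (evalWord u) (evalWord v) := by
    simpa [hproj, mul_assoc] using
      ((hasSections_substLeft u).mul hcs).mul (hasSections_substRight v)
  have hlen := wordLength_evalWord_le (u.flatMap substLeft ++ c ++ v.flatMap substRight)
  rw [← hxy.eq hW, List.length_append, List.length_append] at hlen
  have := (isGeodesic_of_length_eq hu).length_flatMap_substLeft_le
  have := (isGeodesic_of_length_eq hv).length_flatMap_substRight_le
  omega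

end Grig

/-- Length contraction with constant `η = 4`: every element `h` of the first-level
stabilizer `H` of the Grigorchuk group satisfies `|h| ≤ 4·max{|h₀|, |h₁|} + 12`, where
`ψ(h) = (h₀, h₁)` and `|·|` is word length with respect to `{a, b, c, d}`. -/
theorem grigorchuk_length_contraction :
    ∃ H : Subgroup Grig,
      (∀ g : Grig, g ∈ H ↔ FixesFirst (g : Equiv.Perm (List Bool))) ∧
      ∃ ψ : H →* Grig × Grig, PsiProp H ψ ∧
        ∀ h : H, wordLength ({ga, gb, gc, gd} : Set Grig) (h : Grig) ≤
          4 * max (wordLength ({ga, gb, gc, gd} : Set Grig) (ψ h).1)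
                  (wordLength ({ga, gb, gc, gd} : Set Grig) (ψ h).2) + 12 := by
  refine ⟨Grig.levelOneStabilizer, Grig.mem_levelOneStabilizer_iff, Grig.sections,
    Grig.psiProp_sections, fun h => ?_⟩
  have := Grig.wordLength_le_of_hasSections (Grig.hasSections_sections h)
  omega
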